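/- For the system ẋ = -y(1+x+αy), ẏ = x+λy+(1/2)x²+αxy (parameters β = γ = 0), the rotation determinant with respect to α is P·∂Q/∂α − Q·∂P/∂α = y²(λy − (1/2)x²), which is negative at every point (x,y) with x > −1, y ≠ 0, whenever λ < 0. -/
import Mathlib

/-- For `ẋ = -y(1+x+αy)`, `ẏ = x+λy+x²/2+αxy` (the case `β = γ = 0`), the rotation
determinant with respect to `α` equals `y²(λy − x²/2)`; moreover if `λ < 0` it is
negative at every point with `y > 0` (and `(x,y) ≠ (0,0)`). -/
theorem rotation_determinant_alpha_special (al la : ℝ) :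
    (∀ x y : ℝ,
      (-y * (1 + x + al * y)) *
          deriv (fun t : ℝ => x + la * y + (1 / 2) * x ^ 2 + t * x * y) al
        - (x + la * y + (1 / 2) * x ^ 2 + al * x * y) *
          deriv (fun t : ℝ => -y * (1 + x + t * y)) al
      = y ^ 2 * (la * y - x ^ 2 / 2)) ∧
    (la < 0 → ∀ x y : ℝ, 0 < y → (x, y) ≠ (0, 0) →
      y ^ 2 * (la * y - x ^ 2 / 2) < 0) := by
  constructor
  · intro x y
    have h1 : deriv (fun t : ℝ => x + la * y + (1 / 2) * x ^ 2 + t * x * y) al = x * y := by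
      have : (fun t : ℝ => x + la * y + (1 / 2) * x ^ 2 + t * x * y)
          = fun t : ℝ => (x * y) * t + (x + la * y + (1 / 2) * x ^ 2) := by
        funext t; ring
      rw [this, deriv_add_const, deriv_const_mul _ differentiable_id.differentiableAt,
        deriv_id'']
      ring
    have h2 : deriv (fun t : ℝ => -y * (1 + x + t * y)) al = -(y * y) := by
      have : (fun t : ℝ => -y * (1 + x + t * y))
          = fun t : ℝ => (-(y * y)) * t + (-y * (1 + x)) := by
        funext t; ring
      rw [this, deriv_add_const, deriv_const_mul _ differentiable_id.differentiableAt,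
        deriv_id'']
      ring
    rw [h1, h2]; ring
  · intro hla x y hy _
    have h1 : 0 < y ^ 2 := by positivity
    have h2 : la * y - x ^ 2 / 2 < 0 := by nlinarith
    nlinarith
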